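/- arXiv:1610.03798 — 4 statements merged into one kernel-verified Lean document; each statement's English description precedes it below -/
import Mathlib

section
/- Let n be a natural number, F a finite field, S an F-linear subspace of F^n, and x, y vectors in F^n. If the relative Hamming distance from x to S is greater than ε, then for a uniformly random α in F, with probability at least 1 - 1/|F| the relative Hamming distance from αx + y to S is greater than ε/2. -/
/-- If `x` is ε-far (in relative Hamming distance) from the linear
subspace `S ⊆ F^n`, then for a uniformly random `α ∈ F`, with probability at least
`1 - 1/|F|`, the vector `α • x + y` is ε/2-far from `S`. -/
theorem stmt0 (n : ℕ) (F : Type) [Field F] [Fintype F] [DecidableEq F]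
    (S : Submodule F (Fin n → F)) (x y : Fin n → F) (ε : ℝ)
    (hx : ∀ s ∈ S, ε < (hammingDist x s : ℝ) / n) :
    1 - 1 / (Fintype.card F : ℝ) ≤
      (({α : F | ∀ s ∈ S, ε / 2 < (hammingDist (α • x + y) s : ℝ) / n}.ncard : ℝ) /
        (Fintype.card F : ℝ)) := by
  set G : Set F := {α : F | ∀ s ∈ S, ε / 2 < (hammingDist (α • x + y) s : ℝ) / n} with hG
  have hcard : (0 : ℝ) < (Fintype.card F : ℝ) := by
    exact_mod_cast Fintype.card_pos
  -- the complement of G has at most one element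
  have hkey : Gᶜ.ncard ≤ 1 := by
    rw [Set.ncard_le_one_iff]
    intro α₁ α₂ h₁ h₂
    simp only [hG, Set.mem_compl_iff, Set.mem_setOf_eq, not_forall] at h₁ h₂
    obtain ⟨s₁, hs₁, h₁⟩ := h₁
    obtain ⟨s₂, hs₂, h₂⟩ := h₂
    push_neg at h₁ h₂
    by_contra hne
    rcases Nat.eq_zero_or_pos n with hn | hn
    · -- n = 0 : distances are 0, hx gives ε < 0 but h₁ gives ε ≥ 0
      subst hn
      have h0 := hx 0 (Submodule.zero_mem S)
      simp only [Nat.cast_zero, div_zero] at h0 h₁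
      linarith
    · have hnpos : (0 : ℝ) < (n : ℝ) := by exact_mod_cast hn
      set c : F := α₁ - α₂ with hc
      have hc0 : c ≠ 0 := sub_ne_zero.mpr hne
      set s : Fin n → F := c⁻¹ • (s₁ - s₂) with hs
      have hsS : s ∈ S := Submodule.smul_mem _ _ (Submodule.sub_mem _ hs₁ hs₂)
      -- distance bound
      have hd1 : hammingDist x s = hammingDist (c • x) (s₁ - s₂) := by
        have := hammingDist_smul (k := c) (x := x) (y := s)
          (fun i => (mul_right_injective₀ hc0 : IsSMulRegular F c))
        rw [← this, hs, smul_inv_smul₀ hc0]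
      have hd2 : hammingDist (c • x) (s₁ - s₂) ≤
          hammingDist (α₁ • x + y) s₁ + hammingDist (α₂ • x + y) s₂ := by
        have heq : c • x - (s₁ - s₂) = (α₁ • x + y - s₁) - (α₂ • x + y - s₂) := by
          rw [hc, sub_smul]; abel
        calc hammingDist (c • x) (s₁ - s₂)
            = hammingNorm ((α₁ • x + y - s₁) - (α₂ • x + y - s₂)) := by
              rw [hammingDist_comm, hammingDist_eq_hammingNorm, neg_add_eq_sub, heq]
          _ = hammingDist (α₁ • x + y - s₁) (α₂ • x + y - s₂) := by
              rw [hammingDist_comm, hammingDist_eq_hammingNorm, neg_add_eq_sub]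
          _ ≤ hammingDist (α₁ • x + y - s₁) 0 + hammingDist 0 (α₂ • x + y - s₂) :=
              hammingDist_triangle _ _ _
          _ = hammingDist (α₁ • x + y) s₁ + hammingDist (α₂ • x + y) s₂ := by
              rw [hammingDist_zero_right, hammingDist_comm, hammingDist_zero_right,
                hammingDist_comm (α₁ • x + y) s₁, hammingDist_comm (α₂ • x + y) s₂,
                hammingDist_eq_hammingNorm, hammingDist_eq_hammingNorm, neg_add_eq_sub, neg_add_eq_sub]
      have hfar := hx s hsS
      have hle : (hammingDist x s : ℝ) ≤
          (hammingDist (α₁ • x + y) s₁ : ℝ) + (hammingDist (α₂ • x + y) s₂ : ℝ) := by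
        exact_mod_cast hd1 ▸ hd2
      have h₁' : (hammingDist (α₁ • x + y) s₁ : ℝ) ≤ ε / 2 * n := by
        rw [div_le_iff₀ hnpos] at h₁; linarith
      have h₂' : (hammingDist (α₂ • x + y) s₂ : ℝ) ≤ ε / 2 * n := by
        rw [div_le_iff₀ hnpos] at h₂; linarith
      rw [lt_div_iff₀ hnpos] at hfar
      linarith
  have hsum : G.ncard + Gᶜ.ncard = Fintype.card F := by
    rw [Set.ncard_add_ncard_compl]; exact Nat.card_eq_fintype_card
  have hGcard : (Fintype.card F : ℝ) - 1 ≤ (G.ncard : ℝ) := by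
    have : Fintype.card F ≤ G.ncard + 1 := by omega
    have := (Nat.cast_le (α := ℝ)).mpr this
    push_cast at this
    linarith
  rw [sub_le_iff_le_add, ← add_div, le_div_iff₀ hcard]
  nlinarith
end

section
/- Let C ⊆ F^D be a linear code and let S = {(D̃_j, C̃_j)}_{j∈J} be a κ-local cover of C. Then for any subset J' ⊆ J with |J'| ≤ κ, the span of the union of the duals ∪_{j∈J'} C̃_j^⊥ (each extended by zero to F^D) equals the set of dual codewords of C supported in ∪_{j∈J'} D̃_j. -/
set_option linter.unusedSectionVars false
set_option linter.unusedVariables false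

open Submodule

section Aux
variable {F : Type} [Field F] {D : Type} [Fintype D]

/-- Functions supported inside `S`. -/
def suppIn (F : Type) [Field F] {D : Type} (S : Set D) : Submodule F (D → F) where
  carrier := {z | ∀ i ∉ S, z i = 0}
  add_mem' := by intro a b ha hb i hi; simp [ha i hi, hb i hi]
  zero_mem' := by intro i hi; rfl
  smul_mem' := by intro c a ha i hi; simp [ha i hi]

lemma mem_suppIn {S : Set D} {z : D → F} : z ∈ suppIn F S ↔ ∀ i ∉ S, z i = 0 := Iff.rfl

/-- Orthogonal complement w.r.t. the dot pairing. -/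
def orth (M : Submodule F (D → F)) : Submodule F (D → F) where
  carrier := {z | ∀ w ∈ M, ∑ i, z i * w i = 0}
  add_mem' := by
    intro a b ha hb w hw
    simp [add_mul, Finset.sum_add_distrib, ha w hw, hb w hw]
  zero_mem' := by intro w hw; simp
  smul_mem' := by
    intro c a ha w hw
    simp [smul_eq_mul, mul_assoc, ← Finset.mul_sum, ha w hw]

lemma mem_orth {M : Submodule F (D → F)} {z : D → F} :
    z ∈ orth M ↔ ∀ w ∈ M, ∑ i, z i * w i = 0 := Iff.rfl

lemma dot_comm (z w : D → F) : ∑ i, z i * w i = ∑ i, w i * z i := by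
  simp [mul_comm]

lemma le_orth_iff {M N : Submodule F (D → F)} : M ≤ orth N ↔ N ≤ orth M := by
  constructor <;>
  · intro h w hw z hz
    rw [dot_comm]
    exact h hz w hw

lemma toDual_apply [DecidableEq D] (z w : D → F) :
    (Pi.basisFun F D).toDual z w = ∑ i, z i * w i := by
  have hw : ∑ i, w i • (Pi.basisFun F D) i = w := by
    ext j
    simp [Pi.basisFun_apply, Pi.single_apply]
  conv_lhs => rw [← hw]
  simp only [map_sum, map_smul, smul_eq_mul, Module.Basis.toDual_apply_left, Pi.basisFun_repr]
  exact Finset.sum_congr rfl fun i _ => mul_comm _ _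

lemma orth_orth (M : Submodule F (D → F)) : orth (orth M) = M := by
  classical
  ext z
  constructor
  · intro hz
    have h1 : ∀ φ ∈ M.dualAnnihilator, φ z = 0 := by
      intro φ hφ
      obtain ⟨w, rfl⟩ := (Pi.basisFun F D).toDualEquiv.surjective φ
      have hw : w ∈ orth M := by
        intro v hv
        rw [← toDual_apply]
        exact (Submodule.mem_dualAnnihilator _).1 hφ v hv
      have h0 : ∑ i, z i * w i = 0 := hz w hw
      have heq : ((Pi.basisFun F D).toDualEquiv w : Module.Dual F (D → F))
          = (Pi.basisFun F D).toDual w := rfl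
      rw [heq, toDual_apply, dot_comm]
      exact h0
    have : z ∈ M.dualAnnihilator.dualCoannihilator :=
      (Submodule.mem_dualCoannihilator _).2 h1
    rwa [Subspace.dualAnnihilator_dualCoannihilator_eq] at this
  · intro hz w hw
    rw [dot_comm]
    exact hw z hz

lemma orth_iSup {ι : Sort*} (M : ι → Submodule F (D → F)) :
    orth (⨆ i, M i) = ⨅ i, orth (M i) := by
  ext z
  rw [mem_iInf]
  constructor
  · intro h i
    exact fun w hw => h w (le_iSup M i hw)
  · intro h
    have : (⨆ i, M i) ≤ orth (span F {z}) := by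
      rw [iSup_le_iff]
      intro i
      rw [← le_orth_iff, span_singleton_le_iff_mem]
      exact h i
    rw [← span_singleton_le_iff_mem, le_orth_iff]
    exact this

lemma iSup_orth {ι : Sort*} (M : ι → Submodule F (D → F)) :
    (⨆ i, orth (M i)) = orth (⨅ i, M i) := by
  have : (⨅ i, M i) = ⨅ i, orth (orth (M i)) := by simp [orth_orth]
  rw [this, ← orth_iSup, orth_orth]

lemma orth_suppIn_compl (S : Set D) : orth (suppIn F Sᶜ) = suppIn F S := by
  classical
  ext z
  constructor
  · intro hz i hi
    have hmem : (Pi.single i 1 : D → F) ∈ suppIn F Sᶜ := by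
      intro j hj
      have : j ≠ i := fun h => hj (h ▸ hi)
      simp [Pi.single_apply, this]
    have := hz _ hmem
    simpa [Pi.single_apply, mul_ite, Finset.sum_ite_eq'] using this
  · intro hz w hw
    apply Finset.sum_eq_zero
    intro i _
    by_cases hi : i ∈ S
    · rw [hw i (by simpa using hi)]; ring
    · rw [hz i hi]; ring

lemma orth_sup (M N : Submodule F (D → F)) : orth (M ⊔ N) = orth M ⊓ orth N := by
  ext z
  simp only [mem_inf, mem_orth]
  constructor
  · intro h
    exact ⟨fun w hw => h w (le_sup_left (a := M) (b := N) hw),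
           fun w hw => h w (le_sup_right (a := M) (b := N) hw)⟩
  · rintro ⟨h1, h2⟩ w hw
    rcases mem_sup.1 hw with ⟨m, hm, n, hn, rfl⟩
    have : ∑ i, z i * (m + n) i = ∑ i, z i * m i + ∑ i, z i * n i := by
      simp [mul_add, Finset.sum_add_distrib]
    rw [this, h1 m hm, h2 n hn, add_zero]

end Aux

/-- Let `C ⊆ F^D` be a linear code with a κ-local cover
`{(D̃_j, C̃_j)}_{j ∈ J}` (where `C̃_j = C|_{D̃_j}`).  For any `J' ⊆ J` with
`|J'| ≤ κ`, the span of the union of the (zero-extended) duals `C̃_j^⊥` for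
`j ∈ J'` equals the set of dual codewords of `C` supported in `⋃_{j ∈ J'} D̃_j`. -/
theorem stmt2 (F : Type) [Field F] (D : Type) [Fintype D]
    (J : Type) (Dom : J → Set D) (C : Submodule F (D → F))
    (hcover : (⋃ j, Dom j) = Set.univ) (κ : ℕ)
    (hlocal : ∀ J' : Finset J, J'.card ≤ κ →
      ∀ w' : D → F,
        (∀ j ∈ J', ∃ w ∈ C, ∀ i ∈ Dom j, w' i = w i) →
        ∃ w ∈ C, ∀ j ∈ J', ∀ i ∈ Dom j, w' i = w i)
    (J' : Finset J) (hJ' : J'.card ≤ κ) :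
    (Submodule.span F (⋃ j ∈ J',
        { z : D → F | (∀ i, z i ≠ 0 → i ∈ Dom j) ∧
            ∀ w ∈ C, ∑ i, z i * w i = 0 }) : Set (D → F)) =
      { z : D → F | (∀ i, z i ≠ 0 → i ∈ ⋃ j ∈ J', Dom j) ∧
          ∀ w ∈ C, ∑ i, z i * w i = 0 } := by
  classical
  set U : Set D := ⋃ j ∈ J', Dom j with hU
  -- each local dual set is a submodule
  have hset : ∀ S : Set D,
      { z : D → F | (∀ i, z i ≠ 0 → i ∈ S) ∧ ∀ w ∈ C, ∑ i, z i * w i = 0 }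
        = ↑(suppIn F S ⊓ orth C) := by
    intro S
    ext z
    simp only [Set.mem_setOf_eq, SetLike.mem_coe, mem_inf, mem_suppIn, mem_orth]
    constructor
    · rintro ⟨h1, h2⟩
      exact ⟨fun i hi => by_contra fun h => hi (h1 i h), h2⟩
    · rintro ⟨h1, h2⟩
      exact ⟨fun i hi => by_contra fun h => hi (h1 i h), h2⟩
  -- key inf equation from locality
  have hkey : (⨅ j ∈ J', (C ⊔ suppIn F (Dom j)ᶜ)) = C ⊔ suppIn F Uᶜ := by
    apply le_antisymm
    · intro w' hw'
      simp only [Submodule.mem_iInf] at hw'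
      have hexists : ∀ j ∈ J', ∃ w ∈ C, ∀ i ∈ Dom j, w' i = w i := by
        intro j hj
        rcases mem_sup.1 (hw' j hj) with ⟨c, hc, p, hp, rfl⟩
        refine ⟨c, hc, fun i hi => ?_⟩
        have : p i = 0 := hp i (by simpa using hi)
        simp [this]
      obtain ⟨w, hwC, hw⟩ := hlocal J' hJ' w' hexists
      have : w' = w + (w' - w) := by ring
      rw [this]
      refine add_mem_sup hwC ?_
      intro i hi
      rw [Set.notMem_compl_iff] at hi
      rw [hU, Set.mem_iUnion₂] at hi
      obtain ⟨j, hj, hij⟩ := hi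
      simp [hw j hj i hij]
    · rw [le_iInf₂_iff]
      intro j hj
      apply sup_le_sup le_rfl
      intro z hz i hi
      have hiD : i ∈ Dom j := by simpa using hi
      exact hz i (Set.notMem_compl_iff.mpr (Set.mem_biUnion hj hiD))
  have h1 : ∀ j : J, suppIn F (Dom j) ⊓ orth C = orth (C ⊔ suppIn F (Dom j)ᶜ) := by
    intro j
    rw [orth_sup, orth_suppIn_compl, inf_comm]
  have main : (⨆ j ∈ J', (suppIn F (Dom j) ⊓ orth C)) = suppIn F U ⊓ orth C := by
    simp_rw [h1]
    rw [iSup_subtype', iSup_orth]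
    rw [iInf_subtype'] at hkey
    rw [hkey, orth_sup, orth_suppIn_compl, inf_comm]
  have e1 : Submodule.span F (⋃ j ∈ J',
      { z : D → F | (∀ i, z i ≠ 0 → i ∈ Dom j) ∧
          ∀ w ∈ C, ∑ i, z i * w i = 0 })
      = ⨆ j ∈ J', (suppIn F (Dom j) ⊓ orth C) := by
    simp_rw [hset]
    rw [Submodule.span_iUnion₂]
    simp only [Submodule.span_eq]
  rw [e1, main]
  exact (hset U).symm
end

section
/- Let F be a finite field, H ⊆ F, and m, d positive integers with md/|F| < 1/2. Let F̂ be an m-variate polynomial over F with individual degrees less than d such that Σ_{α⃗ ∈ H^m} F̂(α⃗) = v' ≠ v for given v ∈ F. Then for every m-variate polynomial R with individual degrees less than d, there is at most one ρ ∈ F such that Σ_{α⃗ ∈ H^m} (ρ·F̂ + R)(α⃗) = ρ·v; consequently, for uniformly random ρ ∈ F, the probability that Σ_{α⃗ ∈ H^m} (ρ·F̂ + R)(α⃗) = ρ·v is at most 1/|F|. -/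
/-- **soundness of masked sumcheck.** Let `F̂` have individual
degrees `< d` and sum to `v' ≠ v` over `H^m`.  Then for every `R` of individual
degrees `< d` there is at most one `ρ ∈ F` with
`Σ_{α ∈ H^m} (ρ·F̂ + R)(α) = ρ·v`; consequently a uniformly random `ρ`
satisfies this with probability at most `1/|F|`. -/
theorem stmt12 (F : Type) [Field F] [Fintype F] (m d : ℕ) (hm : 0 < m) (hd : 0 < d)
    (H : Finset F) (hsize : (m * d : ℝ) / (Fintype.card F : ℝ) < 1 / 2)
    (Fhat R : MvPolynomial (Fin m) F)
    (hF : ∀ e ∈ Fhat.support, ∀ i, e i < d) (hR : ∀ e ∈ R.support, ∀ i, e i < d)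
    (v v' : F)
    (hsum : ∑ γ ∈ Fintype.piFinset (fun _ : Fin m => H),
      MvPolynomial.eval γ Fhat = v')
    (hvv : v' ≠ v) :
    (∀ ρ₁ ρ₂ : F,
        (∑ γ ∈ Fintype.piFinset (fun _ : Fin m => H),
            MvPolynomial.eval γ (ρ₁ • Fhat + R)) = ρ₁ * v →
        (∑ γ ∈ Fintype.piFinset (fun _ : Fin m => H),
            MvPolynomial.eval γ (ρ₂ • Fhat + R)) = ρ₂ * v →
        ρ₁ = ρ₂) ∧
      ({ ρ : F | ∑ γ ∈ Fintype.piFinset (fun _ : Fin m => H),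
            MvPolynomial.eval γ (ρ • Fhat + R) = ρ * v }.ncard : ℝ) /
          (Fintype.card F : ℝ) ≤ 1 / (Fintype.card F : ℝ) := by
  set S := ∑ γ ∈ Fintype.piFinset (fun _ : Fin m => H), MvPolynomial.eval γ R with hS
  have key : ∀ ρ : F, (∑ γ ∈ Fintype.piFinset (fun _ : Fin m => H),
      MvPolynomial.eval γ (ρ • Fhat + R)) = ρ * v' + S := by
    intro ρ
    simp only [map_add, MvPolynomial.smul_eval, Finset.sum_add_distrib,
      ← Finset.mul_sum, hsum, hS]
  have uniq : ∀ ρ₁ ρ₂ : F,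
      (∑ γ ∈ Fintype.piFinset (fun _ : Fin m => H),
          MvPolynomial.eval γ (ρ₁ • Fhat + R)) = ρ₁ * v →
      (∑ γ ∈ Fintype.piFinset (fun _ : Fin m => H),
          MvPolynomial.eval γ (ρ₂ • Fhat + R)) = ρ₂ * v →
      ρ₁ = ρ₂ := by
    intro ρ₁ ρ₂ h1 h2
    rw [key] at h1 h2
    have hvv' : v' - v ≠ 0 := sub_ne_zero.mpr hvv
    have : ρ₁ * (v' - v) = ρ₂ * (v' - v) := by ring_nf; linear_combination h1 - h2
    exact mul_right_cancel₀ hvv' this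
  refine ⟨uniq, ?_⟩
  have hsub : { ρ : F | ∑ γ ∈ Fintype.piFinset (fun _ : Fin m => H),
      MvPolynomial.eval γ (ρ • Fhat + R) = ρ * v }.Subsingleton := by
    intro a ha b hb; exact uniq a b ha hb
  have hcard : ({ ρ : F | ∑ γ ∈ Fintype.piFinset (fun _ : Fin m => H),
      MvPolynomial.eval γ (ρ • Fhat + R) = ρ * v }.ncard : ℝ) ≤ 1 := by
    have := (Set.ncard_le_one_iff_eq (Set.toFinite _)).mpr (hsub.eq_empty_or_singleton.imp id id)
    exact_mod_cast this
  apply div_le_div_of_nonneg_right hcard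
  positivity
end

section
/- Let F be a field, C the Reed–Muller code of evaluations on F^m of m-variate polynomials with individual degrees less than d, and consider the axis-parallel line cover of C. Then this cover is d-local: for any set of at most d axis-parallel lines ℓ_1, …, ℓ_k (k ≤ d) in F^m, any assignment of values on the union of these lines that restricts to the evaluation of a univariate polynomial of degree less than d along each line extends to a codeword of C, provided |F| ≥ d. -/
open MvPolynomial Polynomial Function Finset

variable {F : Type} [Field F] [Fintype F] [DecidableEq F]

noncomputable def lineRestrict {m : ℕ} (Q : MvPolynomial (Fin m) F) (i : Fin m)
    (b : Fin m → F) : Polynomial F :=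
  MvPolynomial.eval₂ Polynomial.C (fun c => if c = i then Polynomial.X else Polynomial.C (b c)) Q

lemma lineRestrict_eval {m : ℕ} (Q : MvPolynomial (Fin m) F) (i : Fin m) (b : Fin m → F)
    (t : F) :
    (lineRestrict Q i b).eval t = MvPolynomial.eval (Function.update b i t) Q := by
  unfold lineRestrict
  have := MvPolynomial.eval₂_comp_left (Polynomial.evalRingHom t) (Polynomial.C : F →+* F[X])
    (fun c => if c = i then Polynomial.X else Polynomial.C (b c)) Q
  simp only [coe_evalRingHom] at this
  rw [this]
  have h1 : (Polynomial.evalRingHom t).comp (Polynomial.C : F →+* F[X]) = RingHom.id F := by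
    ext r; simp
  rw [h1]
  have h2 : (Polynomial.eval t ∘ fun c => if c = i then Polynomial.X else Polynomial.C (b c))
      = Function.update b i t := by
    funext c
    by_cases hc : c = i
    · subst hc; simp
    · simp [Function.comp, hc, Function.update_of_ne hc]
  rw [h2]
  rfl

lemma lineRestrict_degree_lt {m d : ℕ} (Q : MvPolynomial (Fin m) F) (i : Fin m) (b : Fin m → F)
    (hQ : ∀ e ∈ Q.support, e i < d) :
    (lineRestrict Q i b).degree < (d : WithBot ℕ) := by
  unfold lineRestrict
  conv_lhs => rw [← MvPolynomial.support_sum_monomial_coeff Q]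
  rw [MvPolynomial.eval₂_sum]
  refine lt_of_le_of_lt (Polynomial.degree_sum_le _ _) ?_
  refine (Finset.sup_lt_iff (WithBot.bot_lt_coe d)).mpr fun e he => ?_
  rw [MvPolynomial.eval₂_monomial]
  have hnat : (Polynomial.C (MvPolynomial.coeff e Q) *
      (e.prod fun c n => (if c = i then (Polynomial.X : F[X]) else Polynomial.C (b c)) ^ n)).natDegree
      ≤ e i := by
    refine le_trans (Polynomial.natDegree_mul_le) ?_
    rw [Polynomial.natDegree_C, zero_add, Finsupp.prod]
    refine le_trans (Polynomial.natDegree_prod_le _ _) ?_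
    have hterm : ∀ c ∈ e.support,
        ((if c = i then (Polynomial.X : F[X]) else Polynomial.C (b c)) ^ e c).natDegree ≤
        if c = i then e c else 0 := by
      intro c _
      by_cases hc : c = i
      · simp [hc]
      · simp only [if_neg hc]
        exact le_trans Polynomial.natDegree_pow_le (by simp)
    refine le_trans (Finset.sum_le_sum hterm) ?_
    rw [Finset.sum_ite_eq' e.support i (fun c => e c)]
    split <;> simp
  refine lt_of_le_of_lt (Polynomial.degree_le_natDegree) ?_
  exact_mod_cast lt_of_le_of_lt (Nat.cast_le.mpr hnat) (Nat.cast_lt.mpr (hQ e he))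

noncomputable def toLinePoly {m : ℕ} (E : Polynomial F) (i : Fin m) : MvPolynomial (Fin m) F :=
  Polynomial.eval₂ MvPolynomial.C (MvPolynomial.X i) E

lemma toLinePoly_eval {m : ℕ} (E : Polynomial F) (i : Fin m) (x : Fin m → F) :
    MvPolynomial.eval x (toLinePoly E i) = E.eval (x i) := by
  unfold toLinePoly
  rw [Polynomial.hom_eval₂]
  have h1 : (MvPolynomial.eval x).comp (MvPolynomial.C : F →+* MvPolynomial (Fin m) F)
      = RingHom.id F := by ext r; simp
  rw [h1]
  rw [MvPolynomial.eval_X]; rfl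

lemma toLinePoly_degreeOf {m : ℕ} (E : Polynomial F) (i c : Fin m) :
    MvPolynomial.degreeOf c (toLinePoly E i) ≤ if c = i then E.natDegree else 0 := by
  unfold toLinePoly
  rw [Polynomial.eval₂_eq_sum_range]
  refine le_trans (MvPolynomial.degreeOf_sum_le _ _ _) ?_
  rw [Finset.sup_le_iff]
  intro n hn
  refine le_trans (MvPolynomial.degreeOf_mul_le _ _ _) ?_
  rw [MvPolynomial.degreeOf_C, zero_add]
  refine le_trans (MvPolynomial.degreeOf_pow_le _ _ _) ?_
  rw [MvPolynomial.degreeOf_X]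
  by_cases hc : c = i
  · simp only [if_pos hc]
    rw [Finset.mem_range] at hn
    omega
  · simp [hc]

lemma aux {m : ℕ} (d : ℕ) (hdF : d ≤ Fintype.card F) (w : (Fin m → F) → F) (k : ℕ) :
    k ≤ d → ∀ (dir : Fin k → Fin m) (base : Fin k → Fin m → F),
    (∀ l, ∃ p : Polynomial F, p.degree < (d : WithBot ℕ) ∧
      ∀ t, w (Function.update (base l) (dir l) t) = p.eval t) →
    ∃ Q : MvPolynomial (Fin m) F, (∀ e ∈ Q.support, ∀ i, e i < d) ∧
      ∀ l t, MvPolynomial.eval (Function.update (base l) (dir l) t) Q =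
        w (Function.update (base l) (dir l) t) := by
  induction k with
  | zero => exact fun _ _ _ _ => ⟨0, by simp, fun l => l.elim0⟩
  | succ k IH =>
    intro hk dir base hline
    classical
    obtain ⟨Q₀, hQ₀supp, hQ₀eval⟩ := IH (Nat.le_of_succ_le hk)
      (fun l => dir l.castSucc) (fun l => base l.castSucc) (fun l => hline l.castSucc)
    set i := dir (Fin.last k) with hi
    set b := base (Fin.last k) with hb
    have hd0 : 0 < d := lt_of_lt_of_le (Nat.succ_pos k) hk
    obtain ⟨p, hpdeg, hpw⟩ := hline (Fin.last k)
    set q := lineRestrict Q₀ i b with hq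
    have hqdeg : q.degree < (d : WithBot ℕ) :=
      lineRestrict_degree_lt Q₀ i b (fun e he => hQ₀supp e he i)
    set E := p - q with hE
    have hEdeg : E.degree < (d : WithBot ℕ) :=
      lt_of_le_of_lt (Polynomial.degree_sub_le p q) (max_lt hpdeg hqdeg)
    have hEnat : E.natDegree < d := by
      by_cases hE0 : E = 0
      · simpa [hE0] using hd0
      · exact (Polynomial.natDegree_lt_iff_degree_lt hE0).mpr hEdeg
    have hEeval : ∀ t, E.eval t =
        w (Function.update b i t) - MvPolynomial.eval (Function.update b i t) Q₀ := by
      intro t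
      rw [hE, Polynomial.eval_sub, ← hpw t, lineRestrict_eval]
    by_cases hsame : ∃ l : Fin k, dir l.castSucc = i ∧ ∀ c, c ≠ i → base l.castSucc c = b c
    · obtain ⟨l, hdl, hbl⟩ := hsame
      have hln : ∀ t, Function.update (base l.castSucc) (dir l.castSucc) t
          = Function.update b i t := by
        intro t
        funext c
        by_cases hc : c = i
        · subst hc; rw [hdl]; simp
        · rw [hdl, Function.update_of_ne hc, Function.update_of_ne hc, hbl c hc]
      have hE0 : E = 0 := by
        refine Polynomial.eq_zero_of_natDegree_lt_card_of_eval_eq_zero E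
          (Function.injective_id) (fun t => ?_) (lt_of_lt_of_le hEnat hdF)
        rw [id_eq, hEeval t, ← hln t, hQ₀eval l t, sub_self]
      refine ⟨Q₀, fun e he c => hQ₀supp e he c, fun l' t => ?_⟩
      induction l' using Fin.lastCases with
      | last =>
        have := hEeval t
        rw [hE0] at this
        simp only [Polynomial.eval_zero] at this
        rw [← hi, ← hb]
        exact (sub_eq_zero.mp this.symm).symm
      | cast l' => exact hQ₀eval l' t
    · -- general case
      set CaseC : Fin k → Prop := fun l => dir l.castSucc ≠ i ∧
        ∀ c, c ≠ i → c ≠ dir l.castSucc → base l.castSucc c = b c with hCaseC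
      push_neg at hsame
      have hselEx : ∀ l : Fin k, ∃ c : Fin m, ¬ CaseC l →
          (c ≠ i ∧ c ≠ dir l.castSucc ∧ base l.castSucc c ≠ b c) := by
        intro l
        by_cases h : CaseC l
        · exact ⟨i, fun h' => absurd h h'⟩
        · by_cases hdl : dir l.castSucc = i
          · obtain ⟨c, hc, hcb⟩ := hsame l hdl
            exact ⟨c, fun _ => ⟨hc, by rw [hdl]; exact hc, hcb⟩⟩
          · have h' : ¬(dir l.castSucc ≠ i ∧
                ∀ c, c ≠ i → c ≠ dir l.castSucc → base l.castSucc c = b c) := by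
              simpa [hCaseC] using h
            push_neg at h'
            obtain ⟨c, h1, h2, h3⟩ := h' hdl
            exact ⟨c, fun _ => ⟨h1, h2, h3⟩⟩
      choose sel hselp using hselEx
      set Bset : Finset (Fin k) := Finset.univ.filter (fun l => ¬ CaseC l) with hBset
      set M : MvPolynomial (Fin m) F := ∏ l ∈ Bset,
        (MvPolynomial.C ((b (sel l) - base l.castSucc (sel l))⁻¹) *
          (MvPolynomial.X (sel l) - MvPolynomial.C (base l.castSucc (sel l)))) with hM
      set N : MvPolynomial (Fin m) F := toLinePoly E i with hN
      refine ⟨Q₀ + M * N, ?_, ?_⟩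
      · -- degree condition
        have hdegQ : ∀ c, MvPolynomial.degreeOf c (Q₀ + M * N) < d := by
          intro c
          have h0 : MvPolynomial.degreeOf c Q₀ < d :=
            (MvPolynomial.degreeOf_lt_iff hd0).mpr (fun e he => hQ₀supp e he c)
          refine lt_of_le_of_lt (MvPolynomial.degreeOf_add_le c Q₀ (M * N)) (max_lt h0 ?_)
          refine lt_of_le_of_lt (MvPolynomial.degreeOf_mul_le c M N) ?_
          have hfac : ∀ l ∈ Bset, MvPolynomial.degreeOf c
              (MvPolynomial.C ((b (sel l) - base l.castSucc (sel l))⁻¹) *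
                (MvPolynomial.X (sel l) - MvPolynomial.C (base l.castSucc (sel l)))) ≤
              if c = sel l then 1 else 0 := by
            intro l _
            refine le_trans (MvPolynomial.degreeOf_mul_le _ _ _) ?_
            rw [MvPolynomial.degreeOf_C, zero_add, sub_eq_add_neg, ← MvPolynomial.C_neg]
            refine le_trans (MvPolynomial.degreeOf_add_le _ _ _) ?_
            rw [MvPolynomial.degreeOf_C, MvPolynomial.degreeOf_X]
            simp only [max_le_iff]
            constructor
            · split <;> simp
            · split <;> simp
          by_cases hc : c = i
          · subst hc
            have hMdeg : MvPolynomial.degreeOf i M ≤ 0 := by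
              refine le_trans (MvPolynomial.degreeOf_prod_le _ _ _) ?_
              refine le_trans (Finset.sum_le_sum hfac) ?_
              refine le_of_eq (Finset.sum_eq_zero ?_)
              intro l hl
              have : ¬ CaseC l := (Finset.mem_filter.mp hl).2
              have := (hselp l this).1
              rw [if_neg (fun h => this h.symm)]
            have hNdeg : MvPolynomial.degreeOf i N ≤ E.natDegree := by
              simpa using toLinePoly_degreeOf E i i
            calc MvPolynomial.degreeOf i M + MvPolynomial.degreeOf i N
                ≤ 0 + E.natDegree := Nat.add_le_add hMdeg hNdeg
              _ = E.natDegree := by ring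
              _ < d := hEnat
          · have hNdeg : MvPolynomial.degreeOf c N ≤ 0 := by
              simpa [hc] using toLinePoly_degreeOf E i c
            have hMdeg : MvPolynomial.degreeOf c M ≤ k := by
              refine le_trans (MvPolynomial.degreeOf_prod_le _ _ _) ?_
              refine le_trans (Finset.sum_le_sum hfac) ?_
              refine le_trans (Finset.sum_le_sum (fun l _ => by split <;> simp : ∀ l ∈ Bset,
                (if c = sel l then 1 else 0) ≤ 1)) ?_
              rw [Finset.sum_const, smul_eq_mul, mul_one]
              exact le_trans (Finset.card_filter_le _ _) (by simp)
            calc MvPolynomial.degreeOf c M + MvPolynomial.degreeOf c N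
                ≤ k + 0 := Nat.add_le_add hMdeg hNdeg
              _ < d := by omega
        intro e he c
        exact (MvPolynomial.degreeOf_lt_iff hd0).mp (hdegQ c) e he
      · -- evaluation on lines
        intro l t
        induction l using Fin.lastCases with
        | last =>
          rw [← hi, ← hb]
          rw [map_add, map_mul]
          have hMeval : MvPolynomial.eval (Function.update b i t) M = 1 := by
            rw [hM, map_prod]
            refine Finset.prod_eq_one ?_
            intro l hl
            have hC : ¬ CaseC l := (Finset.mem_filter.mp hl).2
            obtain ⟨hs1, hs2, hs3⟩ := hselp l hC
            rw [map_mul, map_sub, MvPolynomial.eval_C, MvPolynomial.eval_C,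
              MvPolynomial.eval_X, Function.update_of_ne hs1]
            exact inv_mul_cancel₀ (sub_ne_zero.mpr (Ne.symm hs3))
          have hNeval : MvPolynomial.eval (Function.update b i t) N = E.eval t := by
            rw [hN, toLinePoly_eval, Function.update_self]
          rw [hMeval, hNeval, one_mul, hEeval t]
          ring
        | cast l =>
          have hQ0 := hQ₀eval l t
          rw [map_add]
          rw [hQ0]
          have hzero : MvPolynomial.eval
              (Function.update (base l.castSucc) (dir l.castSucc) t) (M * N) = 0 := by
            rw [map_mul]
            by_cases hC : CaseC l
            · obtain ⟨hd1, hd2⟩ := hC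
              have hNeval : MvPolynomial.eval
                  (Function.update (base l.castSucc) (dir l.castSucc) t) N = 0 := by
                rw [hN, toLinePoly_eval, Function.update_of_ne (Ne.symm hd1)]
                have hpt : Function.update b i (base l.castSucc i) =
                    Function.update (base l.castSucc) (dir l.castSucc) (b (dir l.castSucc)) := by
                  funext c
                  by_cases h1 : c = i
                  · subst h1
                    rw [Function.update_self, Function.update_of_ne (Ne.symm hd1)]
                  · by_cases h2 : c = dir l.castSucc
                    · subst h2
                      rw [Function.update_of_ne h1, Function.update_self]
                    · rw [Function.update_of_ne h1, Function.update_of_ne h2, hd2 c h1 h2]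
                rw [hEeval, hpt, hQ₀eval l (b (dir l.castSucc)), sub_self]
              rw [hNeval, mul_zero]
            · have hMeval : MvPolynomial.eval
                  (Function.update (base l.castSucc) (dir l.castSucc) t) M = 0 := by
                rw [hM, map_prod]
                refine Finset.prod_eq_zero (Finset.mem_filter.mpr ⟨Finset.mem_univ l, hC⟩) ?_
                obtain ⟨hs1, hs2, hs3⟩ := hselp l hC
                rw [map_mul, map_sub, MvPolynomial.eval_C, MvPolynomial.eval_C,
                  MvPolynomial.eval_X, Function.update_of_ne hs2, sub_self, mul_zero]
              rw [hMeval, zero_mul]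
          rw [hzero, add_zero]

/-- The axis-parallel line cover of the Reed–Muller code
`RM[F, F, m, d]` (evaluations on `F^m` of `m`-variate polynomials of individual
degrees `< d`) is `d`-local: provided `|F| ≥ d`, for any `k ≤ d` axis-parallel
lines (the `l`-th in direction `dir l` through base point `base l`), any
assignment `w` whose restriction to each of these lines is the evaluation of a
univariate polynomial of degree `< d` agrees, on the union of the lines, with
some Reed–Muller codeword. -/
theorem stmt15 (F : Type) [Field F] [Fintype F] [DecidableEq F] (m d k : ℕ)
    (hkd : k ≤ d) (hdF : d ≤ Fintype.card F)
    (dir : Fin k → Fin m) (base : Fin k → Fin m → F)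
    (w : (Fin m → F) → F)
    (hline : ∀ l : Fin k, ∃ p : Polynomial F, p.degree < (d : WithBot ℕ) ∧
      ∀ t : F, w (Function.update (base l) (dir l) t) = p.eval t) :
    ∃ Q : MvPolynomial (Fin m) F, (∀ e ∈ Q.support, ∀ i, e i < d) ∧
      ∀ l : Fin k, ∀ t : F,
        MvPolynomial.eval (Function.update (base l) (dir l) t) Q =
          w (Function.update (base l) (dir l) t) := by
  exact aux d hdF w k hkd dir base hline
end
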